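/- Let P = {p₁,p₂,p₃,p₄} be the poset with relations p₁ ≼ p₂ ≼ p₃ and p₂ ≼ p₄. Then F = E*_{p₁,p₃} + E*_{p₁,p₄} + E*_{p₂,p₄} is a Frobenius functional on g_A(P), and the spectrum of g_A(P) is binary: ad(F̂) has eigenvalue 0 with multiplicity 4 and eigenvalue 1 with multiplicity 4. -/

import Mathlib

/-!
Common definitions: for a finite poset `P`, identified with `{1,…,n}` via a linear
extension, represented by a relation `le` on `Fin n`, the type-A Lie poset algebra
`gA le` is the Lie subalgebra of `sl(n, ℂ)` spanned by the matrix units `E p q`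
for `p ≺ q` together with all trace-zero diagonal matrices (here realized as a
submodule of complex `n × n` matrices, which is closed under the commutator
bracket).  `gFull le` is the full Lie poset algebra `g(P)` (with all diagonal
matrices).  `FS S` is the functional `F_S = ∑_{(p,q) ∈ S} E*_{p,q}`.
-/

namespace LiePosets

noncomputable section

open scoped BigOperators

/-- Complex `n × n` matrices. -/
abbrev M (n : ℕ) : Type := Matrix (Fin n) (Fin n) ℂ

/-- The strict relation `p ≺ q` attached to a poset relation `le`. -/
def Strict {n : ℕ} (le : Fin n → Fin n → Prop) (p q : Fin n) : Prop := le p q ∧ p ≠ q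

/-- The type-A Lie poset algebra `g_A(P)`: trace-zero matrices supported on
relations of the poset (off-diagonal entries vanish off the strict relations). -/
def gA {n : ℕ} (le : Fin n → Fin n → Prop) : Submodule ℂ (M n) where
  carrier := {A | Matrix.trace A = 0 ∧ ∀ p q : Fin n, p ≠ q → ¬ le p q → A p q = 0}
  add_mem' := by
    rintro A B ⟨hA, hA'⟩ ⟨hB, hB'⟩
    exact ⟨by simp [hA, hB], fun p q h1 h2 => by
      simp [Matrix.add_apply, hA' p q h1 h2, hB' p q h1 h2]⟩
  zero_mem' := ⟨by simp, fun p q _ _ => by simp⟩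
  smul_mem' := by
    rintro c A ⟨hA, hA'⟩
    exact ⟨by simp [hA], fun p q h1 h2 => by
      simp [Matrix.smul_apply, hA' p q h1 h2]⟩

/-- The Lie poset algebra `g(P)` (all diagonal matrices allowed). -/
def gFull {n : ℕ} (le : Fin n → Fin n → Prop) : Submodule ℂ (M n) where
  carrier := {A | ∀ p q : Fin n, p ≠ q → ¬ le p q → A p q = 0}
  add_mem' := by
    rintro A B hA hB p q h1 h2
    simp [Matrix.add_apply, hA p q h1 h2, hB p q h1 h2]
  zero_mem' := fun p q _ _ => by simp
  smul_mem' := by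
    rintro c A hA p q h1 h2
    simp [Matrix.smul_apply, hA p q h1 h2]

/-- The functional `F_S = ∑_{(p,q) ∈ S} E*_{p,q}` reading off the sum of the
coefficients of the matrix entries indexed by `S`. -/
def FS {n : ℕ} (S : Finset (Fin n × Fin n)) : M n →ₗ[ℂ] ℂ where
  toFun A := ∑ pq ∈ S, A pq.1 pq.2
  map_add' A B := by simp [Matrix.add_apply, Finset.sum_add_distrib]
  map_smul' c A := by simp [Matrix.smul_apply, Finset.mul_sum]

/-- `F` is a Frobenius functional on the Lie subalgebra (submodule) `g`:
the kernel of the Kirillov form `B_F(x, y) = F ⁅x, y⁆` on `g` is trivial. -/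
def IsFrobeniusOn {n : ℕ} (g : Submodule ℂ (M n)) (F : M n →ₗ[ℂ] ℂ) : Prop :=
  ∀ x ∈ g, (∀ y ∈ g, F ⁅x, y⁆ = 0) → x = 0

/-- `H` is a principal element for `F` on `g`:  `B_F(H, ·) = F` on `g`. -/
def IsPrincipal {n : ℕ} (g : Submodule ℂ (M n)) (F : M n →ₗ[ℂ] ℂ) (H : M n) : Prop :=
  H ∈ g ∧ ∀ y ∈ g, F ⁅H, y⁆ = F y

/-- The adjoint action `ad H = ⁅H, -⁆` as a linear endomorphism of matrices. -/
def adE {n : ℕ} (H : M n) : Module.End ℂ (M n) :=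
  LinearMap.mulLeft ℂ H - LinearMap.mulRight ℂ H

/-- Multiplicity of `μ` as an eigenvalue of `ad H` acting on `g`. -/
def eigMult {n : ℕ} (g : Submodule ℂ (M n)) (H : M n) (μ : ℂ) : ℕ :=
  Module.finrank ℂ ↥(g ⊓ Module.End.eigenspace (adE H) μ)

/-- `g` has a binary spectrum: for any Frobenius functional `F` and corresponding
principal element `H`, the multiset of eigenvalues of `ad H` on `g` consists of an
equal number of `0`'s and `1`'s. -/
def HasBinarySpectrum {n : ℕ} (g : Submodule ℂ (M n)) : Prop :=
  ∀ (F : M n →ₗ[ℂ] ℂ) (H : M n), IsFrobeniusOn g F → IsPrincipal g F H →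
    eigMult g H 0 = eigMult g H 1 ∧
    eigMult g H 0 + eigMult g H 1 = Module.finrank ℂ ↥g

/-- The kernel of the Kirillov form `B_F` on `g`. -/
def kirKer {n : ℕ} (g : Submodule ℂ (M n)) (F : M n →ₗ[ℂ] ℂ) : Submodule ℂ (M n) where
  carrier := {x | x ∈ g ∧ ∀ y ∈ g, F ⁅x, y⁆ = 0}
  zero_mem' := ⟨g.zero_mem, fun y _ => by
    change F (0 * y - y * 0) = 0
    rw [zero_mul, mul_zero, sub_zero, map_zero]⟩
  add_mem' := by
    rintro a b ⟨ha, ha'⟩ ⟨hb, hb'⟩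
    exact ⟨g.add_mem ha hb, fun y hy => by
      have h1 : F (a * y - y * a) = 0 := ha' y hy
      have h2 : F (b * y - y * b) = 0 := hb' y hy
      change F ((a + b) * y - y * (a + b)) = 0
      rw [add_mul, mul_add, add_sub_add_comm, map_add, h1, h2, add_zero]⟩
  smul_mem' := by
    rintro c a ⟨ha, ha'⟩
    exact ⟨g.smul_mem c ha, fun y hy => by
      have h1 : F (a * y - y * a) = 0 := ha' y hy
      change F ((c • a) * y - y * (c • a)) = 0
      rw [smul_mul_assoc, mul_smul_comm, ← smul_sub, map_smul, h1, smul_zero]⟩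

/-- The index of the Lie algebra `g`: the minimum over all functionals of the
dimension of the kernel of the corresponding Kirillov form. -/
def lieIndex {n : ℕ} (g : Submodule ℂ (M n)) : ℕ :=
  sInf {d : ℕ | ∃ F : M n →ₗ[ℂ] ℂ, d = Module.finrank ℂ ↥(kirKer g F)}

/-- The underlying undirected graph of the directed graph `Γ_{F_S}`. -/
def gammaGraph {n : ℕ} (S : Finset (Fin n × Fin n)) : SimpleGraph (Fin n) where
  Adj p q := p ≠ q ∧ ((p, q) ∈ S ∨ (q, p) ∈ S)
  symm := ⟨fun p q h => ⟨h.1.symm, h.2.symm⟩⟩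
  loopless := ⟨fun p h => h.1 rfl⟩

/-- `F_S` is small: `S` consists of strict relations of the poset and `Γ_{F_S}`
is a spanning tree of the comparability graph. -/
def Small {n : ℕ} (le : Fin n → Fin n → Prop) (S : Finset (Fin n × Fin n)) : Prop :=
  (∀ pq ∈ S, Strict le pq.1 pq.2) ∧ (gammaGraph S).IsTree

/-- `U_{F_S}(P)`: the sinks of `Γ_{F_S}`. -/
def sinks {n : ℕ} (S : Finset (Fin n × Fin n)) : Set (Fin n) :=
  {p | (∃ q, (q, p) ∈ S) ∧ ∀ q, (p, q) ∉ S}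

/-- `D_{F_S}(P)`: the sources of `Γ_{F_S}`. -/
def sources {n : ℕ} (S : Finset (Fin n × Fin n)) : Set (Fin n) :=
  {p | (∃ q, (p, q) ∈ S) ∧ ∀ q, (q, p) ∉ S}

/-- `B_{F_S}(P)`: the vertices of `Γ_{F_S}` that are neither sinks nor sources. -/
def betweens {n : ℕ} (S : Finset (Fin n × Fin n)) : Set (Fin n) :=
  {p | (∃ q, (p, q) ∈ S) ∧ ∃ q, (q, p) ∈ S}

/-- `U` is a filter (up-closed set) of the poset. -/
def IsPosetFilter {n : ℕ} (le : Fin n → Fin n → Prop) (U : Set (Fin n)) : Prop :=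
  ∀ p ∈ U, ∀ q, le p q → q ∈ U

/-- `D` is an order ideal (down-closed set) of the poset. -/
def IsPosetIdeal {n : ℕ} (le : Fin n → Fin n → Prop) (D : Set (Fin n)) : Prop :=
  ∀ p ∈ D, ∀ q, le q p → q ∈ D

/-- Helper to build elements of `Fin n` from natural numbers. -/
def fmk (n : ℕ) (h : 0 < n) (i : ℕ) : Fin n := ⟨i % n, Nat.mod_lt _ h⟩

/-- Restriction of a matrix along an embedding of index types. -/
def restrictMat {N K : ℕ} (f : Fin K → Fin N) (B : M N) : M K :=
  Matrix.of fun p q => B (f p) (f q)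

/-- The poset `P₂ = {p₁,p₂,p₃,p₄}` with `p₁ ≼ p₂ ≼ p₃, p₄`
(elements `pᵢ` indexed as `i - 1 : Fin 4`). -/
def leP2 : Fin 4 → Fin 4 → Prop := fun p q =>
  p = q ∨ (p.val, q.val) ∈ ({(0,1),(0,2),(0,3),(1,2),(1,3)} : Set (ℕ × ℕ))

/-- The index set of `F = E*_{p₁,p₃} + E*_{p₁,p₄} + E*_{p₂,p₄}`. -/
def SP2 : Finset (Fin 4 × Fin 4) := {(0,2),(0,3),(1,3)}

/-!
The adjoint action of a diagonal matrix `diagonal d` scales the matrix unit `E_ij` by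
`d i - d j`. Hence the `μ`-eigenspace of `ad (diagonal d)` in `g_A(P)` is the space of
trace-zero matrices supported on the positions `i ≼ j` with `d i - d j = μ`. Its dimension is
the number of those positions, minus one when `μ = 0` because the trace condition then cuts it.

For `P₂` and `F`, testing the Kirillov form against the matrix units and the differences of
diagonal units gives a nonsingular linear system, so `F` is Frobenius. The principal element is
therefore unique, and `diag(1/2, 1/2, -1/2, -1/2)` works because it scales each `E_pq` read by `F`
by exactly `1`. Counting positions: difference `0` occurs on the diagonal and at `(p₁, p₂)`, and
difference `1` occurs at the four pairs `(pᵢ, pⱼ)` with `i ≤ 2 < j`.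
-/

open Matrix

section General

variable {n : ℕ}

lemma adE_apply (H A : M n) : adE H A = ⁅H, A⁆ := rfl

lemma lie_diagonal_left_apply (d : Fin n → ℂ) (A : M n) (i j : Fin n) :
    ⁅diagonal d, A⁆ i j = (d i - d j) * A i j := by
  rw [Ring.lie_def, Matrix.sub_apply, diagonal_mul, mul_diagonal]
  ring

lemma IsPrincipal.eq {g : Submodule ℂ (M n)} {F : M n →ₗ[ℂ] ℂ} (hF : IsFrobeniusOn g F)
    {H H' : M n} (hH : IsPrincipal g F H) (hH' : IsPrincipal g F H') : H = H' :=
  sub_eq_zero.mp <| hF _ (g.sub_mem hH.1 hH'.1) fun y hy => by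
    rw [Ring.lie_def, sub_mul, mul_sub, sub_sub_sub_comm, map_sub, ← Ring.lie_def,
      ← Ring.lie_def, hH.2 y hy, hH'.2 y hy, sub_self]

lemma single_mem_gA {le : Fin n → Fin n → Prop} {p q : Fin n} (hpq : p ≠ q) (hle : le p q)
    (c : ℂ) : single p q c ∈ gA le :=
  ⟨trace_single_eq_of_ne p q c hpq, fun _ _ _ hij =>
    single_apply_of_ne _ _ _ _ _ fun ⟨hi, hj⟩ => hij (hi ▸ hj ▸ hle)⟩

lemma diagonal_mem_gA (le : Fin n → Fin n → Prop) {d : Fin n → ℂ} (hd : ∑ i, d i = 0) :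
    diagonal d ∈ gA le :=
  ⟨by rw [trace_diagonal, hd], fun _ _ hij _ => diagonal_apply_ne d hij⟩

lemma FS_lie_diagonal {S : Finset (Fin n × Fin n)} {d : Fin n → ℂ}
    (hS : ∀ p ∈ S, d p.1 - d p.2 = 1) (A : M n) : FS S ⁅diagonal d, A⁆ = FS S A :=
  Finset.sum_congr rfl fun p hp => by rw [lie_diagonal_left_apply, hS p hp, one_mul]

def supportedOn (s : Set (Fin n × Fin n)) : Submodule ℂ (M n) where
  carrier := {A | ∀ i j, (i, j) ∉ s → A i j = 0}
  add_mem' hA hB i j h := by rw [Matrix.add_apply, hA i j h, hB i j h, add_zero]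
  zero_mem' _ _ _ := rfl
  smul_mem' c A hA i j h := by rw [Matrix.smul_apply, hA i j h, smul_zero]

lemma mem_supportedOn {s : Set (Fin n × Fin n)} {A : M n} :
    A ∈ supportedOn s ↔ ∀ i j, (i, j) ∉ s → A i j = 0 := Iff.rfl

lemma supportedOn_inter (s t : Set (Fin n × Fin n)) :
    supportedOn (s ∩ t) = supportedOn s ⊓ supportedOn t := by
  ext A
  simp only [Submodule.mem_inf, mem_supportedOn, Set.mem_inter_iff, not_and_or]
  exact ⟨fun h => ⟨fun i j hs => h i j (.inl hs), fun i j ht => h i j (.inr ht)⟩,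
    fun h i j => (·.elim (h.1 i j) (h.2 i j))⟩

lemma gA_eq_ker_trace_inf_supportedOn (le : Fin n → Fin n → Prop) :
    gA le = LinearMap.ker (traceLinearMap (Fin n) ℂ ℂ) ⊓
      supportedOn {p | p.1 = p.2 ∨ le p.1 p.2} := by
  ext A
  simp only [Submodule.mem_inf, LinearMap.mem_ker, traceLinearMap_apply, mem_supportedOn,
    Set.mem_ofPred_eq, not_or]
  exact and_congr_right' ⟨fun h i j hij => h i j hij.1 hij.2, fun h i j hij hle => h i j ⟨hij, hle⟩⟩

lemma eigenspace_adE_diagonal (d : Fin n → ℂ) (μ : ℂ) :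
    Module.End.eigenspace (adE (diagonal d)) μ = supportedOn {p | d p.1 - d p.2 = μ} := by
  ext A
  rw [Module.End.mem_eigenspace_iff, mem_supportedOn, ← Matrix.ext_iff]
  refine forall₂_congr fun i j => ?_
  rw [adE_apply, lie_diagonal_left_apply, Matrix.smul_apply, smul_eq_mul, ← sub_eq_zero,
    ← sub_mul, mul_eq_zero, sub_eq_zero, Set.mem_ofPred_eq, or_iff_not_imp_left]

def supportedOnEquiv (s : Set (Fin n × Fin n)) : supportedOn s ≃ₗ[ℂ] (s → ℂ) := by
  classical
  exact
  { toFun A p := A.1 p.1.1 p.1.2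
    invFun v := ⟨Matrix.of fun i j => if h : (i, j) ∈ s then v ⟨_, h⟩ else 0,
      fun i j h => dif_neg h⟩
    map_add' _ _ := rfl
    map_smul' _ _ := rfl
    left_inv A := by
      ext i j
      by_cases h : (i, j) ∈ s
      · exact dif_pos h
      · exact (dif_neg h).trans (A.2 i j h).symm
    right_inv v := funext fun p => dif_pos p.2 }

lemma finrank_supportedOn (s : Set (Fin n × Fin n)) :
    Module.finrank ℂ (supportedOn s) = s.ncard := by
  classical
  rw [(supportedOnEquiv s).finrank_eq, Module.finrank_fintype_fun_eq_card,
    Fintype.card_eq_nat_card, Nat.card_coe_set_eq]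

lemma single_mem_supportedOn {s : Set (Fin n × Fin n)} {i j : Fin n} (h : (i, j) ∈ s)
    (c : ℂ) : single i j c ∈ supportedOn s := fun _ _ h' =>
  single_apply_of_ne _ _ _ _ _ fun ⟨hi, hj⟩ => h' (hi ▸ hj ▸ h)

lemma finrank_ker_trace_inf_supportedOn {s : Set (Fin n × Fin n)} {i : Fin n} (hi : (i, i) ∈ s) :
    Module.finrank ℂ ↥(LinearMap.ker (traceLinearMap (Fin n) ℂ ℂ) ⊓ supportedOn s) =
      s.ncard - 1 := by
  set V := supportedOn s
  set f := (traceLinearMap (Fin n) ℂ ℂ).domRestrict V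
  have hf : LinearMap.range f = ⊤ := LinearMap.range_eq_top.mpr fun c =>
    ⟨⟨single i i c, single_mem_supportedOn hi c⟩, trace_single_eq_same i c⟩
  have hker : LinearMap.ker f ≃ₗ[ℂ] ↥(LinearMap.ker (traceLinearMap (Fin n) ℂ ℂ) ⊓ V) := by
    refine .trans (.ofEq _ _ ?_) (Submodule.comapSubtypeEquivOfLe inf_le_right)
    rw [LinearMap.ker_domRestrict, Submodule.comap_inf, Submodule.comap_subtype_self, inf_top_eq]
  have := LinearMap.finrank_range_add_finrank_ker f
  rw [hf, finrank_top, Module.finrank_self, hker.finrank_eq, finrank_supportedOn] at this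
  omega

lemma supportedOn_le_ker_trace {s : Set (Fin n × Fin n)} (hs : ∀ i, (i, i) ∉ s) :
    supportedOn s ≤ LinearMap.ker (traceLinearMap (Fin n) ℂ ℂ) := fun A hA =>
  LinearMap.mem_ker.mpr <| by
    rw [traceLinearMap_apply, trace]
    exact Finset.sum_eq_zero fun i _ => hA i i (hs i)

lemma finrank_gA [NeZero n] (le : Fin n → Fin n → Prop) :
    Module.finrank ℂ (gA le) = {p : Fin n × Fin n | p.1 = p.2 ∨ le p.1 p.2}.ncard - 1 := by
  rw [gA_eq_ker_trace_inf_supportedOn, finrank_ker_trace_inf_supportedOn (i := 0) (.inl rfl)]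

lemma gA_inf_eigenspace_adE_diagonal (le : Fin n → Fin n → Prop) (d : Fin n → ℂ) (μ : ℂ) :
    gA le ⊓ Module.End.eigenspace (adE (diagonal d)) μ =
      LinearMap.ker (traceLinearMap (Fin n) ℂ ℂ) ⊓
        supportedOn {p | (p.1 = p.2 ∨ le p.1 p.2) ∧ d p.1 - d p.2 = μ} := by
  rw [gA_eq_ker_trace_inf_supportedOn, eigenspace_adE_diagonal, inf_assoc, ← supportedOn_inter]
  rfl

lemma eigMult_gA_diagonal_zero [NeZero n] (le : Fin n → Fin n → Prop) (d : Fin n → ℂ) :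
    eigMult (gA le) (diagonal d) 0 =
      {p : Fin n × Fin n | (p.1 = p.2 ∨ le p.1 p.2) ∧ d p.1 - d p.2 = 0}.ncard - 1 := by
  rw [eigMult, gA_inf_eigenspace_adE_diagonal]
  exact finrank_ker_trace_inf_supportedOn (i := 0) ⟨.inl rfl, sub_self _⟩

lemma eigMult_gA_diagonal_of_ne_zero (le : Fin n → Fin n → Prop) (d : Fin n → ℂ) {μ : ℂ}
    (hμ : μ ≠ 0) : eigMult (gA le) (diagonal d) μ =
      {p : Fin n × Fin n | (p.1 = p.2 ∨ le p.1 p.2) ∧ d p.1 - d p.2 = μ}.ncard := by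
  rw [eigMult, gA_inf_eigenspace_adE_diagonal, inf_eq_right.mpr, finrank_supportedOn]
  exact supportedOn_le_ker_trace fun i h => hμ (h.2.symm.trans (sub_self _))

end General

section P2

lemma FS_SP2_apply (A : M 4) : FS SP2 A = A 0 2 + A 0 3 + A 1 3 := by
  change ∑ p ∈ SP2, A p.1 p.2 = _
  rw [SP2, Finset.sum_insert (by decide), Finset.sum_insert (by decide), Finset.sum_singleton,
    add_assoc]

lemma setOf_leP2_eq : {p : Fin 4 × Fin 4 | p.1 = p.2 ∨ leP2 p.1 p.2} =
    ↑({(0, 0), (1, 1), (2, 2), (3, 3), (0, 1), (0, 2), (0, 3), (1, 2), (1, 3)} :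
      Finset (Fin 4 × Fin 4)) := by
  ext ⟨i, j⟩
  fin_cases i <;> fin_cases j <;> simp [leP2]

lemma isFrobeniusOn_gA_leP2 : IsFrobeniusOn (gA leP2) (FS SP2) := by
  intro x hx hker
  rw [gA_eq_ker_trace_inf_supportedOn, setOf_leP2_eq, Submodule.mem_inf, LinearMap.mem_ker,
    traceLinearMap_apply, trace, Fin.sum_univ_four, mem_supportedOn] at hx
  obtain ⟨htr, hsupp⟩ := hx
  simp only [diag_apply] at htr
  have hker' : ∀ y ∈ gA leP2, FS SP2 ⁅y, x⁆ = 0 := fun y hy => by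
    rw [Ring.lie_def, ← neg_sub, ← Ring.lie_def, map_neg, hker y hy, neg_zero]
  have e01 := hker' (single 0 1 1) (single_mem_gA (by decide) (by simp [leP2]) 1)
  have e02 := hker' (single 0 2 1) (single_mem_gA (by decide) (by simp [leP2]) 1)
  have e03 := hker' (single 0 3 1) (single_mem_gA (by decide) (by simp [leP2]) 1)
  have e12 := hker' (single 1 2 1) (single_mem_gA (by decide) (by simp [leP2]) 1)
  have e13 := hker' (single 1 3 1) (single_mem_gA (by decide) (by simp [leP2]) 1)
  have d01 := hker' (diagonal ![1, -1, 0, 0]) (diagonal_mem_gA _ (by simp [Fin.sum_univ_four]))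
  have d12 := hker' (diagonal ![0, 1, -1, 0]) (diagonal_mem_gA _ (by simp [Fin.sum_univ_four]))
  have d23 := hker' (diagonal ![0, 0, 1, -1]) (diagonal_mem_gA _ (by simp [Fin.sum_univ_four]))
  simp only [FS_SP2_apply, lie_diagonal_left_apply] at d01 d12 d23
  simp only [FS_SP2_apply, Ring.lie_def, Matrix.sub_apply, Matrix.mul_apply, Fin.sum_univ_four,
    single_apply_same, single_apply_of_ne, Fin.reduceEq, cons_val_zero, cons_val_one, cons_val,
    and_false, and_true, false_and, not_false_eq_true, mul_zero, zero_mul, mul_one, one_mul,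
    add_zero, zero_add, sub_zero, zero_sub, sub_self, neg_mul, sub_neg_eq_add,
    Finset.sum_const_zero, one_ne_zero, zero_ne_one]
    at e01 e02 e03 e12 e13 d01 d12 d23
  have h10 := hsupp 1 0 (by decide)
  have h23 := hsupp 2 3 (by decide)
  have h32 := hsupp 3 2 (by decide)
  have h02 : x 0 2 = 0 := by linear_combination (d01 - d23 + 2 * d12) / 4
  have h13 : x 1 3 = 0 := by linear_combination d12 - h02
  have h03 : x 0 3 = 0 := by linear_combination d01 - h02 + h13
  have h12 : x 1 2 = 0 := by linear_combination e01 - h13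
  have h01 : x 0 1 = 0 := by linear_combination h23 - e12
  have h00 : x 0 0 = 0 := by
    linear_combination (htr - 2 * e03 + 2 * h32 - 2 * h10 + e13 + h01 - e02 + h23) / 4
  have h11 : x 1 1 = 0 := by linear_combination h00 + e03 - h32 + h10 - e13 - h01
  have h22 : x 2 2 = 0 := by linear_combination h00 + e02 - h23
  have h33 : x 3 3 = 0 := by linear_combination h00 + e03 - h32 + h10
  ext i j
  fin_cases i <;> fin_cases j <;> first | assumption | exact hsupp _ _ (by decide)

def principalDiagonalP2 : Fin 4 → ℂ := ![1 / 2, 1 / 2, -1 / 2, -1 / 2]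

lemma isPrincipal_diagonal_principalDiagonalP2 :
    IsPrincipal (gA leP2) (FS SP2) (diagonal principalDiagonalP2) := by
  refine ⟨diagonal_mem_gA _ ?_, fun y _ => FS_lie_diagonal ?_ y⟩
  · norm_num [principalDiagonalP2, Fin.sum_univ_four, cons_val_two, cons_val_three]
  · norm_num [principalDiagonalP2, SP2, cons_val_two, cons_val_three]

lemma setOf_leP2_and_sub_eq_zero :
    {p : Fin 4 × Fin 4 | (p.1 = p.2 ∨ leP2 p.1 p.2) ∧
      principalDiagonalP2 p.1 - principalDiagonalP2 p.2 = 0} =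
    ↑({(0, 0), (1, 1), (2, 2), (3, 3), (0, 1)} : Finset (Fin 4 × Fin 4)) := by
  ext ⟨i, j⟩
  fin_cases i <;> fin_cases j <;> simp [leP2, principalDiagonalP2] <;> norm_num

lemma setOf_leP2_and_sub_eq_one :
    {p : Fin 4 × Fin 4 | (p.1 = p.2 ∨ leP2 p.1 p.2) ∧
      principalDiagonalP2 p.1 - principalDiagonalP2 p.2 = 1} =
    ↑({(0, 2), (0, 3), (1, 2), (1, 3)} : Finset (Fin 4 × Fin 4)) := by
  ext ⟨i, j⟩
  fin_cases i <;> fin_cases j <;> simp [leP2, principalDiagonalP2] <;> norm_num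

end P2

/-- `F` is Frobenius on `g_A(P₂)` and the spectrum is binary:
eigenvalues `0` and `1`, each with multiplicity `4`. -/
theorem P2_frobenius_binary_spectrum :
    IsFrobeniusOn (gA leP2) (FS SP2) ∧
    ∀ H : M 4, IsPrincipal (gA leP2) (FS SP2) H →
      eigMult (gA leP2) H 0 = 4 ∧ eigMult (gA leP2) H 1 = 4 ∧
      eigMult (gA leP2) H 0 + eigMult (gA leP2) H 1 = Module.finrank ℂ ↥(gA leP2) := by
  refine ⟨isFrobeniusOn_gA_leP2, fun H hH => ?_⟩
  obtain rfl := hH.eq isFrobeniusOn_gA_leP2 isPrincipal_diagonal_principalDiagonalP2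
  rw [eigMult_gA_diagonal_zero, setOf_leP2_and_sub_eq_zero,
    eigMult_gA_diagonal_of_ne_zero _ _ one_ne_zero, setOf_leP2_and_sub_eq_one,
    finrank_gA, setOf_leP2_eq]
  simp only [Set.ncard_coe_finset]
  decide


end
end LiePosets
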